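/- On a probability space let X take values in a finite set 𝒳, let A ∈ {0,1}, Δ ∈ {0,1}, and K ∈ {1,…,κ} be random variables, and suppose: (i) failure-type exogeneity holds, i.e., P(K=k | X=x, A=a, Δ=δ) = P(K=k | X=x) whenever P(X=x, A=a, Δ=δ) > 0; and (ii) positivity holds, i.e., c(a,x) = P(Δ=1|A=a,X=x) > 0 whenever P(X=x, A=a) > 0. Then for every bounded function g : 𝒳 × {1,…,κ} → ℝ, E[(Δ / c(A,X)) · g(X,K)] = E[g(X,K)]. In particular, for any rules d : 𝒳 → {0,1} and d₀ : 𝒳 × {1,…,κ} → {0,1}, the estimating equation E[(Δ / c(A,X)) · (1(d(X) = d₀(X,K)) − p)] = 0 has the unique solution p = P(d(X) = d₀(X,K)). -/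

import Mathlib

open MeasureTheory ProbabilityTheory

lemma integral_comp_eq_sum
    {Ω 𝒳 : Type*} [MeasurableSpace Ω] [Fintype 𝒳] [MeasurableSpace 𝒳]
    [MeasurableSingletonClass 𝒳]
    (μ : Measure Ω) [IsProbabilityMeasure μ]
    (κ : ℕ) (X : Ω → 𝒳) (A Δ K : Ω → ℕ)
    (hX : Measurable X) (hA : Measurable A) (hΔ : Measurable Δ) (hK : Measurable K)
    (hA01 : ∀ ω, A ω ≤ 1) (hΔ01 : ∀ ω, Δ ω ≤ 1) (hKκ : ∀ ω, K ω ∈ Finset.Icc 1 κ)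
    (F : 𝒳 → ℕ → ℕ → ℕ → ℝ) :
    ∫ ω, F (X ω) (A ω) (Δ ω) (K ω) ∂μ =
      ∑ x : 𝒳, ∑ a ∈ Finset.range 2, ∑ δ ∈ Finset.range 2, ∑ k ∈ Finset.Icc 1 κ,
        F x a δ k * (μ {ω | X ω = x ∧ A ω = a ∧ Δ ω = δ ∧ K ω = k}).toReal := by
  classical
  set S : Finset (𝒳 × ℕ × ℕ × ℕ) :=
    Finset.univ ×ˢ Finset.range 2 ×ˢ Finset.range 2 ×ˢ Finset.Icc 1 κ with hS
  have hms : ∀ p : 𝒳 × ℕ × ℕ × ℕ,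
      MeasurableSet {ω | X ω = p.1 ∧ A ω = p.2.1 ∧ Δ ω = p.2.2.1 ∧ K ω = p.2.2.2} := by
    intro p
    exact (hX (measurableSet_singleton p.1)).inter
      ((hA (measurableSet_singleton p.2.1)).inter
        ((hΔ (measurableSet_singleton p.2.2.1)).inter (hK (measurableSet_singleton p.2.2.2))))
  have hpt : ∀ ω, F (X ω) (A ω) (Δ ω) (K ω) =
      ∑ p ∈ S, Set.indicator {ω | X ω = p.1 ∧ A ω = p.2.1 ∧ Δ ω = p.2.2.1 ∧ K ω = p.2.2.2}
        (fun _ => F p.1 p.2.1 p.2.2.1 p.2.2.2) ω := by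
    intro ω
    rw [Finset.sum_eq_single_of_mem (X ω, A ω, Δ ω, K ω)]
    · rw [Set.indicator_of_mem]
      exact ⟨rfl, rfl, rfl, rfl⟩
    · simp [hS, Finset.mem_product, Nat.lt_succ_iff, hA01 ω, hΔ01 ω, hKκ ω]
    · intro b _ hb
      apply Set.indicator_of_notMem
      intro hmem
      apply hb
      obtain ⟨h1, h2, h3, h4⟩ := hmem
      obtain ⟨b1, b2, b3, b4⟩ := b
      simp_all
  have h1 : ∫ ω, F (X ω) (A ω) (Δ ω) (K ω) ∂μ =
      ∑ p ∈ S, F p.1 p.2.1 p.2.2.1 p.2.2.2 *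
        (μ {ω | X ω = p.1 ∧ A ω = p.2.1 ∧ Δ ω = p.2.2.1 ∧ K ω = p.2.2.2}).toReal := by
    rw [integral_congr_ae (Filter.Eventually.of_forall hpt), integral_finset_sum _
      (fun p _ => (integrable_const _).indicator (hms p))]
    refine Finset.sum_congr rfl fun p _ => ?_
    rw [integral_indicator_const _ (hms p), smul_eq_mul, mul_comm]
    rfl
  rw [h1, hS, Finset.sum_product, Finset.sum_congr rfl fun x _ => Finset.sum_product ..]
  refine Finset.sum_congr rfl fun x _ => Finset.sum_congr rfl fun a _ => ?_
  rw [Finset.sum_product]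


/-- Under failure-type exogeneity and positivity of the non-censoring
probability `c(a,x) = P(Δ=1|A=a,X=x)`, inverse-probability-of-censoring weighting is
unbiased: `E[(Δ/c(A,X))·g(X,K)] = E[g(X,K)]` for every bounded `g`; in particular the
IPC-weighted POT estimating equation
`E[(Δ/c(A,X))·(1(d(X) = d₀(X,K)) − p)] = 0` has the unique solution
`p = P(d(X) = d₀(X,K))`. -/
theorem ipcw_unbiased_and_pot_estimating_equation
    {Ω 𝒳 : Type*} [MeasurableSpace Ω] [Fintype 𝒳] [MeasurableSpace 𝒳]
    [MeasurableSingletonClass 𝒳]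
    (μ : Measure Ω) [IsProbabilityMeasure μ]
    (κ : ℕ) (X : Ω → 𝒳) (A Δ K : Ω → ℕ)
    (hX : Measurable X) (hA : Measurable A) (hΔ : Measurable Δ) (hK : Measurable K)
    (hA01 : ∀ ω, A ω ≤ 1) (hΔ01 : ∀ ω, Δ ω ≤ 1) (hKκ : ∀ ω, K ω ∈ Finset.Icc 1 κ)
    (c : ℕ → 𝒳 → ℝ)
    (hc : ∀ a x, c a x = (μ[|{ω | A ω = a ∧ X ω = x}] {ω | Δ ω = 1}).toReal)
    (hexo : ∀ x a δ k, μ {ω | X ω = x ∧ A ω = a ∧ Δ ω = δ} ≠ 0 →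
      (μ[|{ω | X ω = x ∧ A ω = a ∧ Δ ω = δ}] {ω | K ω = k}).toReal =
        (μ[|{ω | X ω = x}] {ω | K ω = k}).toReal)
    (hpos : ∀ a x, μ {ω | X ω = x ∧ A ω = a} ≠ 0 → 0 < c a x) :
    (∀ g : 𝒳 → ℕ → ℝ, (∃ C, ∀ x k, |g x k| ≤ C) →
      ∫ ω, (Δ ω : ℝ) / c (A ω) (X ω) * g (X ω) (K ω) ∂μ =
        ∫ ω, g (X ω) (K ω) ∂μ) ∧
    (∀ (d : 𝒳 → ℕ) (d₀ : 𝒳 → ℕ → ℕ), (∀ x, d x ≤ 1) → (∀ x k, d₀ x k ≤ 1) →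
      ∀ p : ℝ,
        (∫ ω, (Δ ω : ℝ) / c (A ω) (X ω) *
            ((if d (X ω) = d₀ (X ω) (K ω) then (1 : ℝ) else 0) - p) ∂μ = 0) ↔
          p = (μ {ω | d (X ω) = d₀ (X ω) (K ω)}).toReal) := by
  classical
  -- abbreviations
  set m : 𝒳 → ℕ → ℕ → ℕ → ℝ :=
    fun x a δ k => (μ {ω | X ω = x ∧ A ω = a ∧ Δ ω = δ ∧ K ω = k}).toReal with hm
  set q : 𝒳 → ℕ → ℝ := fun x k => (μ[|{ω | X ω = x}] {ω | K ω = k}).toReal with hq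
  -- measurability
  have msX : ∀ x : 𝒳, MeasurableSet {ω | X ω = x} := fun x => hX (measurableSet_singleton x)
  have msXA : ∀ x a, MeasurableSet {ω | X ω = x ∧ A ω = a} :=
    fun x a => (msX x).inter (hA (measurableSet_singleton a))
  have msXAΔ : ∀ x a δ, MeasurableSet {ω | X ω = x ∧ A ω = a ∧ Δ ω = δ} :=
    fun x a δ => (msX x).inter ((hA (measurableSet_singleton a)).inter
      (hΔ (measurableSet_singleton δ)))
  have msXAK : ∀ x a k, MeasurableSet {ω | X ω = x ∧ A ω = a ∧ K ω = k} :=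
    fun x a k => (msX x).inter ((hA (measurableSet_singleton a)).inter
      (hK (measurableSet_singleton k)))
  have msXK : ∀ x k, MeasurableSet {ω | X ω = x ∧ K ω = k} :=
    fun x k => (msX x).inter (hK (measurableSet_singleton k))
  -- splitting lemma
  have hsplit : ∀ (s : Set Ω), MeasurableSet s → ∀ (B : Ω → ℕ), Measurable B →
      (∀ ω, B ω ≤ 1) → μ s = μ {ω | ω ∈ s ∧ B ω = 0} + μ {ω | ω ∈ s ∧ B ω = 1} := by
    intro s hs B hB hB1
    have hu : s = {ω | ω ∈ s ∧ B ω = 0} ∪ {ω | ω ∈ s ∧ B ω = 1} := by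
      ext ω
      simp only [Set.mem_union, Set.mem_setOf_eq]
      constructor
      · intro h
        rcases Nat.le_one_iff_eq_zero_or_eq_one.mp (hB1 ω) with h0 | h1
        · exact Or.inl ⟨h, h0⟩
        · exact Or.inr ⟨h, h1⟩
      · rintro (⟨h, _⟩ | ⟨h, _⟩) <;> exact h
    have hdisj : Disjoint {ω | ω ∈ s ∧ B ω = 0} {ω | ω ∈ s ∧ B ω = 1} := by
      rw [Set.disjoint_left]
      rintro ω ⟨_, h0⟩ ⟨_, h1⟩
      omega
    nth_rewrite 1 [hu]
    exact measure_union hdisj (hs.inter (hB (measurableSet_singleton 1)))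
  -- Fact A
  have factA : ∀ x a k, (1 / c a x) * m x a 1 k =
      (μ {ω | X ω = x ∧ A ω = a}).toReal * q x k := by
    intro x a k
    by_cases h0 : μ {ω | X ω = x ∧ A ω = a} = 0
    · have hm0 : m x a 1 k = 0 := by
        have h : μ {ω | X ω = x ∧ A ω = a ∧ Δ ω = 1 ∧ K ω = k} = 0 :=
          le_antisymm (le_trans (measure_mono (show {ω | X ω = x ∧ A ω = a ∧ Δ ω = 1 ∧ K ω = k} ⊆ {ω | X ω = x ∧ A ω = a} from fun ω h => ⟨h.1, h.2.1⟩)) h0.le) (zero_le)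
        simp [hm, h]
      rw [hm0, h0]
      simp
    · have hcpos := hpos a x h0
      have hAXeq : {ω | A ω = a ∧ X ω = x} = {ω | X ω = x ∧ A ω = a} := by
        ext ω; exact and_comm
      have hcval : c a x = (μ {ω | X ω = x ∧ A ω = a ∧ Δ ω = 1}).toReal /
          (μ {ω | X ω = x ∧ A ω = a}).toReal := by
        rw [hc, hAXeq, cond_apply (msXA x a)]
        have hset : {ω | X ω = x ∧ A ω = a} ∩ {ω | Δ ω = 1} =
            {ω | X ω = x ∧ A ω = a ∧ Δ ω = 1} := by
          ext ω; simp only [Set.mem_inter_iff, Set.mem_setOf_eq]; tauto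
        rw [hset, ENNReal.toReal_mul, ENNReal.toReal_inv]
        ring
      have hsD0 : μ {ω | X ω = x ∧ A ω = a ∧ Δ ω = 1} ≠ 0 := by
        intro h
        rw [hcval, h] at hcpos
        simp at hcpos
      have hexo1 := hexo x a 1 k hsD0
      have hcondD : (μ[|{ω | X ω = x ∧ A ω = a ∧ Δ ω = 1}] {ω | K ω = k}).toReal =
          m x a 1 k / (μ {ω | X ω = x ∧ A ω = a ∧ Δ ω = 1}).toReal := by
        rw [cond_apply (msXAΔ x a 1)]
        have hset : {ω | X ω = x ∧ A ω = a ∧ Δ ω = 1} ∩ {ω | K ω = k} =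
            {ω | X ω = x ∧ A ω = a ∧ Δ ω = 1 ∧ K ω = k} := by
          ext ω; simp only [Set.mem_inter_iff, Set.mem_setOf_eq]; tauto
        rw [hset, ENNReal.toReal_mul, ENNReal.toReal_inv, hm]
        ring
      have htD : (μ {ω | X ω = x ∧ A ω = a ∧ Δ ω = 1}).toReal ≠ 0 :=
        ENNReal.toReal_ne_zero.mpr ⟨hsD0, measure_ne_top μ _⟩
      have ht2 : (μ {ω | X ω = x ∧ A ω = a}).toReal ≠ 0 :=
        ENNReal.toReal_ne_zero.mpr ⟨h0, measure_ne_top μ _⟩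
      have hqval : q x k = m x a 1 k / (μ {ω | X ω = x ∧ A ω = a ∧ Δ ω = 1}).toReal := by
        simp only [hq]
        rw [← hexo1, hcondD]
      rw [hqval, hcval]
      field_simp
  -- Fact BC : sum over a
  have factBC : ∀ x k, (μ {ω | X ω = x ∧ A ω = 0}).toReal * q x k +
      (μ {ω | X ω = x ∧ A ω = 1}).toReal * q x k = (μ {ω | X ω = x ∧ K ω = k}).toReal := by
    intro x k
    have hXsplit : μ {ω | X ω = x} = μ {ω | X ω = x ∧ A ω = 0} + μ {ω | X ω = x ∧ A ω = 1} :=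
      hsplit {ω | X ω = x} (msX x) A hA hA01
    have hsum : (μ {ω | X ω = x ∧ A ω = 0}).toReal + (μ {ω | X ω = x ∧ A ω = 1}).toReal =
        (μ {ω | X ω = x}).toReal := by
      rw [hXsplit, ENNReal.toReal_add (measure_ne_top μ _) (measure_ne_top μ _)]
    rw [← add_mul, hsum]
    -- now : (μ {X = x}).toReal * q x k = (μ {X=x ∧ K=k}).toReal
    by_cases h0 : μ {ω | X ω = x} = 0
    · have h1 : μ {ω | X ω = x ∧ K ω = k} = 0 :=
        le_antisymm (le_trans (measure_mono (show {ω | X ω = x ∧ K ω = k} ⊆ {ω | X ω = x} from fun ω h => h.1)) h0.le) (zero_le)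
      simp [h0, h1]
    · have hqval : q x k = (μ {ω | X ω = x ∧ K ω = k}).toReal / (μ {ω | X ω = x}).toReal := by
        simp only [hq]
        rw [cond_apply (msX x)]
        have hset : {ω | X ω = x} ∩ {ω | K ω = k} = {ω | X ω = x ∧ K ω = k} := rfl
        rw [hset, ENNReal.toReal_mul, ENNReal.toReal_inv]
        ring
      have ht : (μ {ω | X ω = x}).toReal ≠ 0 :=
        ENNReal.toReal_ne_zero.mpr ⟨h0, measure_ne_top μ _⟩
      rw [hqval]
      field_simp
  -- Fact D : sum over δ
  have factD : ∀ x a k, m x a 0 k + m x a 1 k = (μ {ω | X ω = x ∧ A ω = a ∧ K ω = k}).toReal := by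
    intro x a k
    have h := hsplit {ω | X ω = x ∧ A ω = a ∧ K ω = k} (msXAK x a k) Δ hΔ hΔ01
    have e0 : {ω | ω ∈ {ω | X ω = x ∧ A ω = a ∧ K ω = k} ∧ Δ ω = 0} =
        {ω | X ω = x ∧ A ω = a ∧ Δ ω = 0 ∧ K ω = k} := by
      ext ω; simp only [Set.mem_setOf_eq]; tauto
    have e1 : {ω | ω ∈ {ω | X ω = x ∧ A ω = a ∧ K ω = k} ∧ Δ ω = 1} =
        {ω | X ω = x ∧ A ω = a ∧ Δ ω = 1 ∧ K ω = k} := by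
      ext ω; simp only [Set.mem_setOf_eq]; tauto
    rw [e0, e1] at h
    simp only [hm]
    rw [h, ENNReal.toReal_add (measure_ne_top μ _) (measure_ne_top μ _)]
  -- Fact D2 : sum over a
  have factD2 : ∀ x k, (μ {ω | X ω = x ∧ A ω = 0 ∧ K ω = k}).toReal +
      (μ {ω | X ω = x ∧ A ω = 1 ∧ K ω = k}).toReal = (μ {ω | X ω = x ∧ K ω = k}).toReal := by
    intro x k
    have h := hsplit {ω | X ω = x ∧ K ω = k} (msXK x k) A hA hA01
    have e0 : {ω | ω ∈ {ω | X ω = x ∧ K ω = k} ∧ A ω = 0} =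
        {ω | X ω = x ∧ A ω = 0 ∧ K ω = k} := by
      ext ω; simp only [Set.mem_setOf_eq]; tauto
    have e1 : {ω | ω ∈ {ω | X ω = x ∧ K ω = k} ∧ A ω = 1} =
        {ω | X ω = x ∧ A ω = 1 ∧ K ω = k} := by
      ext ω; simp only [Set.mem_setOf_eq]; tauto
    rw [e0, e1] at h
    rw [h, ENNReal.toReal_add (measure_ne_top μ _) (measure_ne_top μ _)]
  -- Part 1
  have main : ∀ g : 𝒳 → ℕ → ℝ,
      ∫ ω, (Δ ω : ℝ) / c (A ω) (X ω) * g (X ω) (K ω) ∂μ = ∫ ω, g (X ω) (K ω) ∂μ := by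
    intro g
    have e1 : ∫ ω, (Δ ω : ℝ) / c (A ω) (X ω) * g (X ω) (K ω) ∂μ =
        ∑ x : 𝒳, ∑ a ∈ Finset.range 2, ∑ δ ∈ Finset.range 2, ∑ k ∈ Finset.Icc 1 κ,
          ((δ : ℝ) / c a x * g x k) * m x a δ k :=
      integral_comp_eq_sum μ κ X A Δ K hX hA hΔ hK hA01 hΔ01 hKκ
        (fun x a δ k => (δ : ℝ) / c a x * g x k)
    have e2 : ∫ ω, g (X ω) (K ω) ∂μ =
        ∑ x : 𝒳, ∑ a ∈ Finset.range 2, ∑ δ ∈ Finset.range 2, ∑ k ∈ Finset.Icc 1 κ,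
          g x k * m x a δ k :=
      integral_comp_eq_sum μ κ X A Δ K hX hA hΔ hK hA01 hΔ01 hKκ (fun x a δ k => g x k)
    rw [e1, e2]
    refine Finset.sum_congr rfl fun x _ => ?_
    simp only [Finset.sum_range_succ, Finset.sum_range_zero, zero_add, Nat.cast_zero,
      Nat.cast_one, zero_div, zero_mul, Finset.sum_const_zero]
    rw [← Finset.sum_add_distrib, ← Finset.sum_add_distrib, ← Finset.sum_add_distrib,
      ← Finset.sum_add_distrib]
    refine Finset.sum_congr rfl fun k _ => ?_
    have hA0 := factA x 0 k
    have hA1 := factA x 1 k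
    have hBC := factBC x k
    have hD0 := factD x 0 k
    have hD1 := factD x 1 k
    have hD2 := factD2 x k
    have l0 : (1 : ℝ) / c 0 x * g x k * m x 0 1 k =
        (μ {ω | X ω = x ∧ A ω = 0}).toReal * q x k * g x k := by
      rw [← hA0]; ring
    have l1 : (1 : ℝ) / c 1 x * g x k * m x 1 1 k =
        (μ {ω | X ω = x ∧ A ω = 1}).toReal * q x k * g x k := by
      rw [← hA1]; ring
    calc (1 : ℝ) / c 0 x * g x k * m x 0 1 k + 1 / c 1 x * g x k * m x 1 1 k
        = ((μ {ω | X ω = x ∧ A ω = 0}).toReal * q x k +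
            (μ {ω | X ω = x ∧ A ω = 1}).toReal * q x k) * g x k := by
          rw [l0, l1]; ring
      _ = (μ {ω | X ω = x ∧ K ω = k}).toReal * g x k := by rw [hBC]
      _ = (g x k * m x 0 0 k + g x k * m x 0 1 k) + (g x k * m x 1 0 k + g x k * m x 1 1 k) := by
          rw [← hD2, ← hD0, ← hD1]; ring
  refine ⟨fun g _ => main g, ?_⟩
  -- Part 2
  intro d d₀ _ _ p
  set s₀ : Set Ω := {ω | d (X ω) = d₀ (X ω) (K ω)} with hs₀def
  have hs₀ : MeasurableSet s₀ := by
    have : s₀ = ⋃ x : 𝒳, ({ω | X ω = x} ∩ K ⁻¹' {k | d x = d₀ x k}) := by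
      ext ω
      simp only [hs₀def, Set.mem_iUnion, Set.mem_inter_iff, Set.mem_setOf_eq, Set.mem_preimage]
      constructor
      · intro h; exact ⟨X ω, rfl, h⟩
      · rintro ⟨x, rfl, h⟩; exact h
    rw [this]
    exact MeasurableSet.iUnion fun x => (msX x).inter (hK trivial)
  have heq : (fun ω => if d (X ω) = d₀ (X ω) (K ω) then (1 : ℝ) else 0) =
      s₀.indicator (fun _ => 1) := by
    ext ω
    by_cases h : d (X ω) = d₀ (X ω) (K ω)
    · simp [Set.indicator_apply, hs₀def, h]
    · simp [Set.indicator_apply, hs₀def, h]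
  have hint : Integrable (fun ω => if d (X ω) = d₀ (X ω) (K ω) then (1 : ℝ) else 0) μ := by
    rw [heq]; exact (integrable_const (1 : ℝ)).indicator hs₀
  have hval : ∫ ω, ((if d (X ω) = d₀ (X ω) (K ω) then (1 : ℝ) else 0) - p) ∂μ =
      (μ s₀).toReal - p := by
    rw [integral_sub hint (integrable_const p), integral_const]
    simp only [measure_univ, probReal_univ, ENNReal.toReal_one, one_smul]
    congr 1
    rw [heq, integral_indicator_const _ hs₀, smul_eq_mul, mul_one]
    rfl
  have hmain := main (fun x k => (if d x = d₀ x k then (1 : ℝ) else 0) - p)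
  rw [hmain, hval]
  constructor
  · intro h; linarith
  · intro h; linarith
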